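/- arXiv:2204.03987 — 2 statements merged into one kernel-verified Lean document; each statement's English description precedes it below -/
import Mathlib

section
/- Let $F$ be a finite field with $q \equiv 3 \pmod 4$, $(W,\langle,\rangle)$ a symplectic space over $F$, and $\tau : F^\times \to F^\times$ the homomorphism that is trivial on $\{\pm 1\}$ and sends each square $a^2$ (for $a$ in the odd-order part) to an inverse square root. Let $\chi_q^+$ be the quadratic (Legendre) character of $F^\times$. Then the map $\alpha : H(W) \times \mathrm{GSp}(W) \to H(W)$, $((v,t), g) \mapsto (\tau(\lambda_g) v g, \chi_q^+(\lambda_g) t)$, defines a right action of $\mathrm{GSp}(W)$ on the Heisenberg group $H(W)$ by group automorphisms, where $\lambda_g$ is the similitude factor of $g$. -/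
/-!
The point is the identity `χ(λ) = τ(λ)² λ` in `Fˣ`. On squares it is the defining property
of `τ`; since `q ≡ 3 (mod 4)` makes `-1` a non-square, a non-square `λ` has `-λ` a square, so
`τ(λ)² λ = -τ(-λ)² (-λ) = -1`. Hence `v ↦ τ(λ_g) v g` scales `⟨,⟩` by exactly the factor
`χ(λ_g)` applied to the centre, which is what makes `α(g)` respect the Heisenberg law;
the action axioms follow from multiplicativity of `τ`, `χ` and `λ`.
-/

lemma Units.isSquare_val_iff {G₀ : Type*} [GroupWithZero G₀] (u : G₀ˣ) :
    IsSquare (u : G₀) ↔ IsSquare u := by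
  constructor
  · rintro ⟨r, hr⟩
    have hr0 : r ≠ 0 := by rintro rfl; simp at hr
    exact ⟨Units.mk0 r hr0, Units.ext hr⟩
  · rintro ⟨r, rfl⟩
    exact ⟨r, Units.val_mul r r⟩

namespace FiniteField

variable {F : Type*} [Field F] [Fintype F]

lemma isSquare_neg_of_not_isSquare (hF : Fintype.card F % 4 = 3) {a : Fˣ}
    (ha : ¬IsSquare a) : IsSquare (-a) := by
  classical
  rw [← Units.isSquare_val_iff] at ha ⊢
  have hneg_one : quadraticChar F (-1) = -1 :=
    quadraticChar_neg_one_iff_not_isSquare.mpr fun h => isSquare_neg_one_iff.mp h hF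
  rw [Units.val_neg, ← quadraticChar_one_iff_isSquare (neg_ne_zero.mpr a.ne_zero),
    neg_eq_neg_one_mul, map_mul, hneg_one,
    quadraticChar_neg_one_iff_not_isSquare.mpr ha]
  norm_num

lemma chi_eq_tau_sq_mul (hF : Fintype.card F % 4 = 3) (τ χ : Fˣ →* Fˣ) (hτ1 : τ (-1) = 1)
    (hτsq : ∀ a : Fˣ, IsSquare a → τ a ^ 2 * a = 1)
    (hχsq : ∀ a : Fˣ, IsSquare a → χ a = 1) (hχns : ∀ a : Fˣ, ¬IsSquare a → χ a = -1)
    (a : Fˣ) : χ a = τ a ^ 2 * a := by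
  by_cases ha : IsSquare a
  · rw [hχsq a ha, hτsq a ha]
  · have hτneg : τ (-a) = τ a := by rw [neg_eq_neg_one_mul, map_mul, hτ1, one_mul]
    have hsq := hτsq (-a) (isSquare_neg_of_not_isSquare hF ha)
    rw [hτneg, mul_neg] at hsq
    rw [hχns a ha, ← hsq, neg_neg]

end FiniteField

section Similitude

variable {R W : Type*} [CommRing R] [AddCommGroup W] [Module R W]

/-- `((v, t), g) ↦ (c v g, d t)`; the paper's `α` is the case `c = τ(λ_g)`, `d = χ(λ_g)`. -/
def similitudeAct (c d : Rˣ) (g : W ≃ₗ[R] W) (p : W × R) : W × R :=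
  ((c : R) • g p.1, (d : R) * p.2)

lemma similitudeAct_bijective (c d : Rˣ) (g : W ≃ₗ[R] W) :
    Function.Bijective (similitudeAct c d g) :=
  Function.Bijective.prodMap ((MulAction.bijective c).comp g.bijective)
    (MulAction.bijective d)

lemma similitudeAct_trans (c c' d d' : Rˣ) (g g' : W ≃ₗ[R] W) (p : W × R) :
    similitudeAct (c * c') (d * d') (g.trans g') p =
      similitudeAct c' d' g' (similitudeAct c d g p) := by
  ext
  · simp only [similitudeAct, LinearEquiv.trans_apply, map_smul, smul_smul, Units.val_mul,
      mul_comm (c : R)]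
  · simp only [similitudeAct, Units.val_mul]
    ring

lemma similitudeAct_one_one_refl (p : W × R) :
    similitudeAct 1 1 (LinearEquiv.refl R W) p = p := by
  simp [similitudeAct]

end Similitude

section Heisenberg

variable {F W : Type*} [Field F] [AddCommGroup W] [Module F W]

def heisMul (ω : W →ₗ[F] W →ₗ[F] F) (p q : W × F) : W × F :=
  (p.1 + q.1, p.2 + q.2 + (2 : F)⁻¹ * ω p.1 q.1)

lemma similitudeAct_heisMul (ω : W →ₗ[F] W →ₗ[F] F) {g : W ≃ₗ[F] W} {lam : F}
    (hg : ∀ v w : W, ω (g v) (g w) = lam * ω v w) {c d : Fˣ} (hcd : (c : F) ^ 2 * lam = d)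
    (p q : W × F) :
    similitudeAct c d g (heisMul ω p q) =
      heisMul ω (similitudeAct c d g p) (similitudeAct c d g q) := by
  simp only [similitudeAct, heisMul, map_add, smul_add, map_smul, LinearMap.smul_apply,
    smul_eq_mul, hg, ← hcd, Prod.mk.injEq, true_and]
  ring

end Heisenberg

theorem stmt6_general (F : Type*) [Field F] [Fintype F]
    (hq3 : Fintype.card F % 4 = 3)
    (W : Type*) [AddCommGroup W] [Module F W]
    (ω : W →ₗ[F] W →ₗ[F] F)
    (τ : Fˣ →* Fˣ) (hτ1 : τ (-1) = 1)
    (hτsq : ∀ a : Fˣ, IsSquare a → (τ a) ^ 2 * a = 1)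
    (χ : Fˣ →* Fˣ) (hχsq : ∀ x : Fˣ, IsSquare x → χ x = 1)
    (hχns : ∀ x : Fˣ, ¬ IsSquare x → χ x = -1)
    (mul : W × F → W × F → W × F)
    (hmul : ∀ p q : W × F,
      mul p q = (p.1 + q.1, p.2 + q.2 + (2 : F)⁻¹ * ω p.1 q.1))
    (A : (W ≃ₗ[F] W) → Fˣ → (W × F) → (W × F))
    (hA : ∀ (g : W ≃ₗ[F] W) (lam : Fˣ) (p : W × F),
      A g lam p = (((τ lam : Fˣ) : F) • g p.1, ((χ lam : Fˣ) : F) * p.2)) :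
    ∀ (g g' : W ≃ₗ[F] W) (lam lam' : Fˣ),
      (∀ v w : W, ω (g v) (g w) = (lam : F) * ω v w) →
      (∀ v w : W, ω (g' v) (g' w) = (lam' : F) * ω v w) →
      -- each α(g) is an automorphism of H(W)
      (∀ p q : W × F, A g lam (mul p q) = mul (A g lam p) (A g lam q)) ∧
      Function.Bijective (A g lam) ∧
      -- right-action axioms
      (∀ p : W × F, A (g.trans g') (lam * lam') p = A g' lam' (A g lam p)) ∧
      (∀ p : W × F, A (LinearEquiv.refl F W) 1 p = p) := by
  have hA' : A = fun g lam => similitudeAct (τ lam) (χ lam) g := by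
    funext g lam p
    exact hA g lam p
  have hmul' : mul = heisMul ω := by
    funext p q
    exact hmul p q
  subst hA' hmul'
  intro g g' lam lam' hg _
  have hχ : ((τ lam : Fˣ) : F) ^ 2 * lam = χ lam := by
    simp [FiniteField.chi_eq_tau_sq_mul hq3 τ χ hτ1 hτsq hχsq hχns lam]
  refine ⟨similitudeAct_heisMul ω hg hχ, similitudeAct_bijective _ _ g, fun p => ?_,
    fun p => ?_⟩
  · simp only [map_mul]
    exact similitudeAct_trans _ _ _ _ g g' p
  · simp only [map_one]
    exact similitudeAct_one_one_refl p

/-- Let `F` be a finite field with `q ≡ 3 (mod 4)`, `(W, ω)` a symplectic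
`F`-space, `τ : Fˣ → Fˣ` the homomorphism trivial on `{±1}` with `τ(a)² a = 1` on
squares, and `χ` the Legendre character.  Then
`α : ((v,t), g) ↦ (τ(λ_g) • (v g), χ(λ_g) t)` is a right action of `GSp(W)` on the
Heisenberg group `H(W)` by group automorphisms. -/
theorem stmt6 (F : Type*) [Field F] [Fintype F]
    (hq3 : Fintype.card F % 4 = 3)
    (W : Type*) [AddCommGroup W] [Module F W]
    (ω : W →ₗ[F] W →ₗ[F] F) (halt : ∀ w : W, ω w w = 0)
    (τ : Fˣ →* Fˣ) (hτ1 : τ (-1) = 1)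
    (hτsq : ∀ a : Fˣ, IsSquare a → (τ a) ^ 2 * a = 1)
    (χ : Fˣ →* Fˣ) (hχsq : ∀ x : Fˣ, IsSquare x → χ x = 1)
    (hχns : ∀ x : Fˣ, ¬ IsSquare x → χ x = -1)
    (mul : W × F → W × F → W × F)
    (hmul : ∀ p q : W × F,
      mul p q = (p.1 + q.1, p.2 + q.2 + (2 : F)⁻¹ * ω p.1 q.1))
    (A : (W ≃ₗ[F] W) → Fˣ → (W × F) → (W × F))
    (hA : ∀ (g : W ≃ₗ[F] W) (lam : Fˣ) (p : W × F),
      A g lam p = (((τ lam : Fˣ) : F) • g p.1, ((χ lam : Fˣ) : F) * p.2)) :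
    ∀ (g g' : W ≃ₗ[F] W) (lam lam' : Fˣ),
      (∀ v w : W, ω (g v) (g w) = (lam : F) * ω v w) →
      (∀ v w : W, ω (g' v) (g' w) = (lam' : F) * ω v w) →
      -- each α(g) is an automorphism of H(W)
      (∀ p q : W × F, A g lam (mul p q) = mul (A g lam p) (A g lam q)) ∧
      Function.Bijective (A g lam) ∧
      -- right-action axioms
      (∀ p : W × F, A (g.trans g') (lam * lam') p = A g' lam' (A g lam p)) ∧
      (∀ p : W × F, A (LinearEquiv.refl F W) 1 p = p) :=
  stmt6_general F hq3 W ω τ hτ1 hτsq χ hχsq hχns mul hmul A hA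
end

section
/- Let $K$ be a field of characteristic $0$ and $\mathscr{W} = \mathcal{X}\oplus\mathcal{X}^*$ a polarized symplectic $K$-space with $B$ as above. The map $\alpha : \mathrm{Sp}(\mathscr{W}) \to \mathrm{Ps}(\mathscr{W})$, $g \mapsto (g, q_g)$ with $q_g(x+x^*) = \tfrac{1}{2}B(xa, xb) + \tfrac{1}{2}B(x^*c, x^*d) + B(x^*c, xb)$ for $g = \begin{pmatrix} a & b \\ c & d\end{pmatrix}$ (block decomposition relative to $\mathcal{X}\oplus\mathcal{X}^*$), is a group homomorphism splitting the exact sequence $1 \to \mathscr{W}^\vee \to \mathrm{Ps}(\mathscr{W}) \to \mathrm{Sp}(\mathscr{W}) \to 1$, where $\mathscr{W}^\vee = \mathrm{Hom}_{\mathrm{group}}(\mathscr{W}, K)$. -/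
/-!
With `β u v := ω (p u) v` (which is `B` up to the isotropy of `𝒳`), the isotropy of `𝒳` and
`𝒳*` makes `ω` the antisymmetrization `β - βᵀ` of `β`. For symplectic `g` this turns the block
formula into `q_g w = ½ (β (g w) (g w) - β w w)`. In this form `q_g (w + w') - q_g w - q_g w'`
is `β (g w) (g w') - β w w'` precisely because `g` preserves `β - βᵀ`, and the cocycle identity
`q_{g' g} = q_g + q_{g'} ∘ g` is a telescoping sum.
-/

namespace LinearMap

variable {K V : Type*} [Field K] [AddCommGroup V] [Module K V]
  {ω : V →ₗ[K] V →ₗ[K] K} {p : V →ₗ[K] V}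

theorem apply_proj_sub_proj_eq_apply (hX : ∀ u v, ω (p u) (p v) = 0) (u v : V) :
    ω (p u) (v - p v) = ω (p u) v := by
  rw [map_sub, hX, sub_zero]

theorem eq_apply_proj_sub_apply_proj_swap (hω : ω.IsAlt)
    (hX : ∀ u v, ω (p u) (p v) = 0) (hXstar : ∀ u v, ω (u - p u) (v - p v) = 0) (u v : V) :
    ω u v = ω (p u) v - ω (p v) u := by
  have h := hXstar u v
  simp only [map_sub, sub_apply, hX] at h
  linear_combination h - hω.neg (p v) u

theorem blockFormula_eq_half_sub (h2 : (2 : K) ≠ 0) (hω : ω.IsAlt)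
    (hX : ∀ u v, ω (p u) (p v) = 0) (hXstar : ∀ u v, ω (u - p u) (v - p v) = 0)
    {g : V →ₗ[K] V} (hg : ∀ v w, ω (g v) (g w) = ω v w) (w : V) :
    2⁻¹ * ω (p (g (p w))) (g (p w) - p (g (p w)))
        + 2⁻¹ * ω (p (g (w - p w))) (g (w - p w) - p (g (w - p w)))
        + ω (p (g (w - p w))) (g (p w) - p (g (p w)))
      = 2⁻¹ * (ω (p (g w)) (g w) - ω (p w) w) := by
  have hgw : g w = g (p w) + g (w - p w) := by rw [← map_add, add_sub_cancel]
  have hself : ω (p w) w = ω (p (g (p w))) (g (w - p w)) - ω (p (g (w - p w))) (g (p w)) := by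
    rw [← apply_proj_sub_proj_eq_apply hX, ← hg, eq_apply_proj_sub_apply_proj_swap hω hX hXstar]
  rw [hgw, hself]
  simp only [apply_proj_sub_proj_eq_apply hX, map_add, add_apply]
  field_simp
  ring

theorem half_sub_map_add (h2 : (2 : K) ≠ 0) (hω : ω.IsAlt)
    (hX : ∀ u v, ω (p u) (p v) = 0) (hXstar : ∀ u v, ω (u - p u) (v - p v) = 0)
    {g : V →ₗ[K] V} (hg : ∀ v w, ω (g v) (g w) = ω v w) (w w' : V) :
    2⁻¹ * (ω (p (g (w + w'))) (g (w + w')) - ω (p (w + w')) (w + w'))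
        - 2⁻¹ * (ω (p (g w)) (g w) - ω (p w) w) - 2⁻¹ * (ω (p (g w')) (g w') - ω (p w') w')
      = ω (p (g w)) (g w') - ω (p w) w' := by
  have hsymp := hg w w'
  rw [eq_apply_proj_sub_apply_proj_swap hω hX hXstar,
    eq_apply_proj_sub_apply_proj_swap hω hX hXstar w] at hsymp
  simp only [map_add, add_apply]
  field_simp
  linear_combination -hsymp

end LinearMap

open LinearMap in
theorem stmt13_general (K : Type*) [Field K] [CharZero K]
    (𝒲 : Type*) [AddCommGroup 𝒲] [Module K 𝒲]
    (ω : 𝒲 →ₗ[K] 𝒲 →ₗ[K] K) (halt : ∀ w : 𝒲, ω w w = 0)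
    (p : 𝒲 →ₗ[K] 𝒲)
    (hX : ∀ u v : 𝒲, ω (p u) (p v) = 0)
    (hXstar : ∀ u v : 𝒲, ω (u - p u) (v - p v) = 0)
    (B : 𝒲 → 𝒲 → K) (hB : ∀ w w' : 𝒲, B w w' = ω (p w) (w' - p w'))
    (Q : (𝒲 →ₗ[K] 𝒲) → 𝒲 → K)
    (hQ : ∀ (g : 𝒲 →ₗ[K] 𝒲) (w : 𝒲),
      Q g w = (2 : K)⁻¹ * ω (p (g (p w))) (g (p w) - p (g (p w)))
            + (2 : K)⁻¹ * ω (p (g (w - p w))) (g (w - p w) - p (g (w - p w)))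
            + ω (p (g (w - p w))) (g (p w) - p (g (p w)))) :
    ∀ g g' : 𝒲 →ₗ[K] 𝒲,
      (∀ v w : 𝒲, ω (g v) (g w) = ω v w) → Function.Bijective g →
      (∀ v w : 𝒲, ω (g' v) (g' w) = ω v w) → Function.Bijective g' →
      -- q_g ∈ Σ_g
      (∀ w w' : 𝒲, Q g (w + w') - Q g w - Q g w' = B (g w) (g w') - B w w') ∧
      -- the section is multiplicative: q_{g g'} = q_g + q_{g'} ∘ g
      (∀ w : 𝒲, Q (g'.comp g) w = Q g w + Q g' (g w)) := by
  intro g g' hg _ hg' _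
  have hQ_half : ∀ h : 𝒲 →ₗ[K] 𝒲, (∀ v w, ω (h v) (h w) = ω v w) →
      ∀ w, Q h w = 2⁻¹ * (ω (p (h w)) (h w) - ω (p w) w) := fun h hh w => by
    rw [hQ, blockFormula_eq_half_sub two_ne_zero halt hX hXstar hh]
  have hg'g : ∀ v w, ω (g' (g v)) (g' (g w)) = ω v w := fun v w => by rw [hg', hg]
  refine ⟨fun w w' => ?_, fun w => ?_⟩
  · simp only [hQ_half g hg, hB, apply_proj_sub_proj_eq_apply hX]
    exact half_sub_map_add two_ne_zero halt hX hXstar hg w w'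
  · rw [hQ_half _ hg'g, hQ_half g hg, hQ_half g' hg', comp_apply]
    ring

/-- Let `K` be a field of characteristic 0 and `𝒲 = 𝒳 ⊕ 𝒳*` a polarized
symplectic `K`-space (polarization given by the projection `p` onto `𝒳` along `𝒳*`),
with `B(w,w') = ω(p w, w' - p w')`.  The map `α : g ↦ (g, q_g)` with
`q_g(x + x*) = ½ B(xa, xb) + ½ B(x*c, x*d) + B(x*c, xb)` (block decomposition
`xa = p(g(p w))`, `xb = g(p w) - p(g(p w))`, `x*c = p(g(w - p w))`,
`x*d = g(w - p w) - p(g(w - p w))`) is a group homomorphism `Sp(𝒲) → Ps(𝒲)`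
splitting `1 → 𝒲^∨ → Ps(𝒲) → Sp(𝒲) → 1`: each `q_g` lies in `Σ_g`, and
`q_{gg'} = q_g + q_{g'} ∘ g`. -/
theorem stmt13 (K : Type*) [Field K] [CharZero K]
    (𝒲 : Type*) [AddCommGroup 𝒲] [Module K 𝒲]
    (ω : 𝒲 →ₗ[K] 𝒲 →ₗ[K] K) (halt : ∀ w : 𝒲, ω w w = 0)
    (p : 𝒲 →ₗ[K] 𝒲) (hp : p ∘ₗ p = p)
    (hX : ∀ u v : 𝒲, ω (p u) (p v) = 0)
    (hXstar : ∀ u v : 𝒲, ω (u - p u) (v - p v) = 0)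
    (B : 𝒲 → 𝒲 → K) (hB : ∀ w w' : 𝒲, B w w' = ω (p w) (w' - p w'))
    (Q : (𝒲 →ₗ[K] 𝒲) → 𝒲 → K)
    (hQ : ∀ (g : 𝒲 →ₗ[K] 𝒲) (w : 𝒲),
      Q g w = (2 : K)⁻¹ * ω (p (g (p w))) (g (p w) - p (g (p w)))
            + (2 : K)⁻¹ * ω (p (g (w - p w))) (g (w - p w) - p (g (w - p w)))
            + ω (p (g (w - p w))) (g (p w) - p (g (p w)))) :
    ∀ g g' : 𝒲 →ₗ[K] 𝒲,
      (∀ v w : 𝒲, ω (g v) (g w) = ω v w) → Function.Bijective g →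
      (∀ v w : 𝒲, ω (g' v) (g' w) = ω v w) → Function.Bijective g' →
      -- q_g ∈ Σ_g
      (∀ w w' : 𝒲, Q g (w + w') - Q g w - Q g w' = B (g w) (g w') - B w w') ∧
      -- the section is multiplicative: q_{g g'} = q_g + q_{g'} ∘ g
      (∀ w : 𝒲, Q (g'.comp g) w = Q g w + Q g' (g w)) :=
  stmt13_general K 𝒲 ω halt p hX hXstar B hB Q hQ
end
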